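/- Let V be a finite set of n nodes and σ : Finset V → ℝ a monotone and submodular set function such that for every ranking r the values M_r(v) are pairwise distinct, and let F be the IMRank step (sorting V in decreasing order of M_r). Then along the IMRank iteration r₀, r₁ = F(r₀), r₂ = F(r₁), …, for every k with 1 ≤ k ≤ n, the sequence t ↦ I_{r_t}(k) is monotone nondecreasing. -/
import Mathlib


open Finset

variable {V : Type*} [Fintype V] [DecidableEq V]

/-- The set of top-`k` nodes of ranking `r` (positions `1,…,k`, i.e. indices `< k`). -/
def topk {n : ℕ} (r : Fin n ≃ V) (k : ℕ) : Finset V :=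
  (Finset.univ.filter fun i : Fin n => (i : ℕ) < k).image r

/-- Ranking-based marginal influence spread `M_r(v) = σ(T_r(i)) − σ(T_r(i−1))`
where `i` is the (1-based) position of `v` in `r`. -/
noncomputable def margM {n : ℕ} (σ : Finset V → ℝ) (r : Fin n ≃ V) (v : V) : ℝ :=
  σ (topk r ((r.symm v : ℕ) + 1)) - σ (topk r (r.symm v))

/-- Influence spread of the top-`k` nodes: `I_r(k) = Σ_{i=1}^k M_r(v_{r_i})`. -/
noncomputable def inflI {n : ℕ} (σ : Finset V → ℝ) (r : Fin n ≃ V) (k : ℕ) : ℝ :=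
  ∑ i ∈ Finset.univ.filter (fun i : Fin n => (i : ℕ) < k), margM σ r (r i)

lemma mem_topk {n : ℕ} (r : Fin n ≃ V) (k : ℕ) (v : V) :
    v ∈ topk r k ↔ (r.symm v : ℕ) < k := by
  simp only [topk, Finset.mem_image, Finset.mem_filter, Finset.mem_univ, true_and]
  constructor
  · rintro ⟨i, hi, rfl⟩; simpa using hi
  · intro h; exact ⟨r.symm v, h, r.apply_symm_apply v⟩

lemma topk_succ {n : ℕ} (r : Fin n ≃ V) (i : Fin n) :
    topk r ((i : ℕ) + 1) = insert (r i) (topk r (i : ℕ)) := by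
  ext v
  simp only [mem_topk, Finset.mem_insert, Nat.lt_succ_iff_lt_or_eq]
  constructor
  · rintro (h | h)
    · exact Or.inr h
    · left
      have : r.symm v = i := Fin.ext h
      rw [← this, r.apply_symm_apply]
  · rintro (rfl | h)
    · right; simp
    · exact Or.inl h

lemma margM_eq {n : ℕ} (σ : Finset V → ℝ) (r : Fin n ≃ V) (v : V) :
    margM σ r v = σ (insert v (topk r (r.symm v))) - σ (topk r (r.symm v)) := by
  rw [margM, topk_succ, r.apply_symm_apply]

lemma inflI_eq {n : ℕ} (σ : Finset V → ℝ) (r : Fin n ≃ V) :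
    ∀ k : ℕ, k ≤ n → inflI σ r k = σ (topk r k) - σ ∅ := by
  intro k
  induction k with
  | zero =>
    intro _
    have h1 : (Finset.univ.filter fun i : Fin n => (i : ℕ) < 0) = ∅ := by
      simp
    have h2 : topk r 0 = ∅ := by simp [topk, h1]
    simp [inflI, h1, h2]
  | succ k ih =>
    intro hk
    have hkn : k < n := hk
    set kf : Fin n := ⟨k, hkn⟩ with hkf
    have hfil : (Finset.univ.filter fun i : Fin n => (i : ℕ) < k + 1)
        = insert kf (Finset.univ.filter fun i : Fin n => (i : ℕ) < k) := by
      ext i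
      simp only [Finset.mem_filter, Finset.mem_univ, true_and, Finset.mem_insert,
        Nat.lt_succ_iff_lt_or_eq]
      constructor
      · rintro (h | h)
        · exact Or.inr h
        · exact Or.inl (Fin.ext h)
      · rintro (rfl | h)
        · right; rfl
        · exact Or.inl h
    have hnot : kf ∉ (Finset.univ.filter fun i : Fin n => (i : ℕ) < k) := by simp [hkf]
    have hM : margM σ r (r kf) = σ (topk r (k + 1)) - σ (topk r k) := by
      rw [margM, r.symm_apply_apply]
    rw [inflI, hfil, Finset.sum_insert hnot, hM]
    have := ih (le_of_lt hkn)
    rw [inflI] at this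
    rw [this]
    ring

lemma sum_margM_le {n : ℕ} (σ : Finset V → ℝ)
    (hsub : ∀ S T : Finset V, S ⊆ T → ∀ v ∉ T,
      σ (insert v T) - σ T ≤ σ (insert v S) - σ S)
    (r : Fin n ≃ V) (S : Finset V) :
    ∑ v ∈ S, margM σ r v ≤ σ S - σ ∅ := by
  induction S using Finset.strongInductionOn with
  | _ S ih =>
    rcases S.eq_empty_or_nonempty with rfl | hne
    · simp
    · obtain ⟨v, hvS, hvmax⟩ := S.exists_max_image (fun v => (r.symm v : ℕ)) hne
      have hsubset : S.erase v ⊆ topk r (r.symm v) := by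
        intro u hu
        rw [mem_topk]
        have hune : u ≠ v := Finset.ne_of_mem_erase hu
        have hle := hvmax u (Finset.mem_of_mem_erase hu)
        have : r.symm u ≠ r.symm v := fun h => hune (by
          have := congrArg r h; simpa using this)
        omega
      have hvnot : v ∉ topk r (r.symm v) := by
        rw [mem_topk]; omega
      have hM : margM σ r v ≤ σ (insert v (S.erase v)) - σ (S.erase v) := by
        rw [margM_eq]
        exact hsub _ _ hsubset v hvnot
      rw [Finset.insert_erase hvS] at hM
      have hsum : ∑ u ∈ S, margM σ r u = margM σ r v + ∑ u ∈ S.erase v, margM σ r u :=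
        (Finset.add_sum_erase S _ hvS).symm
      have hih := ih (S.erase v) (Finset.erase_ssubset hvS)
      rw [hsum]
      linarith

lemma sum_le_of_pointwise {f : V → ℝ} {A B : Finset V} (hcard : B.card = A.card)
    (h : ∀ a ∈ A, ∀ b ∈ B, f b ≤ f a) : ∑ b ∈ B, f b ≤ ∑ a ∈ A, f a := by
  rcases A.eq_empty_or_nonempty with rfl | hne
  · have : B = ∅ := Finset.card_eq_zero.1 (by simpa using hcard)
    simp [this]
  · obtain ⟨a0, ha0, hmin⟩ := A.exists_min_image f hne
    have h1 : ∑ b ∈ B, f b ≤ B.card • f a0 :=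
      Finset.sum_le_card_nsmul B f (f a0) (fun b hb => h a0 ha0 b hb)
    have h2 : A.card • f a0 ≤ ∑ a ∈ A, f a :=
      Finset.card_nsmul_le_sum A f (f a0) (fun a ha => hmin a ha)
    rw [hcard] at h1
    linarith

lemma step_le {n : ℕ} (σ : Finset V → ℝ)
    (hsub : ∀ S T : Finset V, S ⊆ T → ∀ v ∉ T,
      σ (insert v T) - σ T ≤ σ (insert v S) - σ S)
    (F : (Fin n ≃ V) → (Fin n ≃ V))
    (hF : ∀ (r : Fin n ≃ V) (i j : Fin n), i ≤ j → margM σ r (F r j) ≤ margM σ r (F r i))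
    (r : Fin n ≃ V) (k : ℕ) (hkn : k ≤ n) :
    inflI σ r k ≤ inflI σ (F r) k := by
  set f : V → ℝ := margM σ r with hf
  set A : Finset V := topk (F r) k with hA
  set B : Finset V := topk r k with hB
  have hcard : B.card = A.card := by
    rw [hA, hB, topk, topk, Finset.card_image_of_injective _ r.injective,
      Finset.card_image_of_injective _ (F r).injective]
  -- inflI σ r k = ∑ v ∈ B, f v
  have e1 : inflI σ r k = ∑ v ∈ B, f v := by
    rw [hB, topk, Finset.sum_image (fun i _ j _ h => r.injective h), inflI]
  -- pointwise comparison on the symmetric difference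
  have hpt : ∀ a ∈ A \ B, ∀ b ∈ B \ A, f b ≤ f a := by
    intro a ha b hb
    have haA : ((F r).symm a : ℕ) < k := (mem_topk _ _ _).1 (Finset.mem_sdiff.1 ha).1
    have hbA : ¬ ((F r).symm b : ℕ) < k := fun h =>
      (Finset.mem_sdiff.1 hb).2 ((mem_topk _ _ _).2 h)
    have hle : (F r).symm a ≤ (F r).symm b := by
      rw [Fin.le_def]; omega
    have := hF r _ _ hle
    rwa [(F r).apply_symm_apply, (F r).apply_symm_apply] at this
  have hcard' : (B \ A).card = (A \ B).card := by
    have h1 := Finset.card_inter_add_card_sdiff B A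
    have h2 := Finset.card_inter_add_card_sdiff A B
    rw [Finset.inter_comm] at h2
    omega
  have hdiff : ∑ b ∈ B \ A, f b ≤ ∑ a ∈ A \ B, f a :=
    sum_le_of_pointwise hcard' hpt
  have e2 : ∑ v ∈ B, f v ≤ ∑ v ∈ A, f v := by
    have h1 := Finset.sum_inter_add_sum_sdiff B A f
    have h2 := Finset.sum_inter_add_sum_sdiff A B f
    rw [Finset.inter_comm] at h2
    linarith
  have e3 : ∑ v ∈ A, f v ≤ σ A - σ ∅ := sum_margM_le σ hsub r A
  have e4 : inflI σ (F r) k = σ A - σ ∅ := inflI_eq σ (F r) k hkn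
  linarith

theorem imrank_inflI_monotone' {n : ℕ} (σ : Finset V → ℝ)
    (hsub : ∀ S T : Finset V, S ⊆ T → ∀ v ∉ T,
      σ (insert v T) - σ T ≤ σ (insert v S) - σ S)
    (F : (Fin n ≃ V) → (Fin n ≃ V))
    (hF : ∀ (r : Fin n ≃ V) (i j : Fin n), i ≤ j → margM σ r (F r j) ≤ margM σ r (F r i))
    (r0 : Fin n ≃ V) :
    ∀ k : ℕ, 1 ≤ k → k ≤ n → Monotone (fun t : ℕ => inflI σ (F^[t] r0) k) := by
  intro k _ hkn
  apply monotone_nat_of_le_succ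
  intro t
  simp only [Function.iterate_succ_apply']
  exact step_le σ hsub F hF (F^[t] r0) k hkn

/-- along the IMRank iteration `r_t = F^[t] r₀`, for every `k` with
`1 ≤ k ≤ n`, the sequence `t ↦ I_{r_t}(k)` is monotone nondecreasing. -/
theorem imrank_inflI_monotone {n : ℕ} (σ : Finset V → ℝ)
    (hmono : ∀ S T : Finset V, S ⊆ T → σ S ≤ σ T)
    (hsub : ∀ S T : Finset V, S ⊆ T → ∀ v ∉ T,
      σ (insert v T) - σ T ≤ σ (insert v S) - σ S)
    (hdist : ∀ r : Fin n ≃ V, Function.Injective (margM σ r))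
    (F : (Fin n ≃ V) → (Fin n ≃ V))
    (hF : ∀ (r : Fin n ≃ V) (i j : Fin n), i ≤ j → margM σ r (F r j) ≤ margM σ r (F r i))
    (r0 : Fin n ≃ V) :
    ∀ k : ℕ, 1 ≤ k → k ≤ n → Monotone (fun t : ℕ => inflI σ (F^[t] r0) k) := by
  exact imrank_inflI_monotone' σ hsub F hF r0
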